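/- arXiv:1204.3196 — 2 statements merged into one kernel-verified Lean document; each statement's English description precedes it below -/
import Mathlib

section
/- Let A be a discrete valuation ring with quotient field K, maximal ideal m, and residue field k = A/m of characteristic zero. Let R be a domain containing A that is finitely generated and flat as an A-algebra, such that K ⊗_A R ≅ K[t] (polynomial ring in one variable over K) and R/mR ≅ k[t] (polynomial ring in one variable over k). Then R ≅ A[t], a polynomial ring in one variable over A. -/
/-!
Base change along `A → K` embeds the flat `A`-algebra `R` into `K[X]`; call the image `S`.
Since `A` is a valuation ring and `𝔪S ≠ S`, we have `S ∩ K = A`. Write `∂ = d/dX`. The leading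
coefficients `c` of the elements `C c * X + C v` of `S`, and the scalars `d` with `d ∂ S ⊆ S`,
form two `A`-submodules of `K`. As `S` is finitely generated, both are fractional ideals, hence
principal, generated by `c` and `d` say. Fix `x = C c * X + C v ∈ S`.

The key step is that `d * c` is a unit of `A`. Otherwise `D = d ∂` maps `x` into `𝔪`. Modulo
`π`, `D` induces a derivation of `S/πS ≅ k[t]`, which is a multiple of `d/dt`. Either that
multiple is `0`, so that `(d/π) ∂ S ⊆ S` as well, or `x` is constant modulo `π`, so that
`(x - a)/π ∈ S` has leading coefficient `c/π`. Both contradict the choice of generators.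

Hence `c⁻¹ ∂` is a derivation of `S` with `x ↦ 1`. Positive integers are units of `A`, so
polynomials over `A` have antiderivatives, and induction on the degree gives `S = A[x]`.
-/

open Polynomial IsLocalRing

theorem Polynomial.exists_derivative_eq {A : Type*} [CommRing A]
    (h : ∀ n : ℕ, IsUnit ((n : A) + 1)) (g : A[X]) : ∃ G : A[X], derivative G = g := by
  induction g using Polynomial.induction_on' with
  | add p q hp hq =>
    obtain ⟨P, rfl⟩ := hp
    obtain ⟨Q, rfl⟩ := hq
    exact ⟨P + Q, derivative_add⟩
  | monomial n a =>
    refine ⟨monomial (n + 1) (↑(h n).unit⁻¹ * a), ?_⟩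
    rw [derivative_monomial, Nat.add_sub_cancel, Nat.cast_add_one, mul_right_comm,
      IsUnit.val_inv_mul, one_mul]

theorem IsLocalRing.isUnit_natCast_add_one {A : Type*} [CommRing A] [IsLocalRing A]
    [CharZero (ResidueField A)] (n : ℕ) : IsUnit ((n : A) + 1) := by
  rw [← isUnit_map_iff (residue A), map_add, map_natCast, map_one]
  exact (Nat.cast_add_one_ne_zero n).isUnit

section FractionField

variable {A K : Type*} [CommRing A] [Field K] [Algebra A K] [IsFractionRing A K]

open nonZeroDivisors in
theorem Submodule.exists_ne_zero_eq_span_singleton_of_isInteger_smul [IsDomain A]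
    [IsPrincipalIdealRing A] {N : Submodule A K} (hN0 : N ≠ ⊥) {a : A} (ha : a ≠ 0)
    (hN : ∀ c ∈ N, IsLocalization.IsInteger A (a • c)) :
    ∃ c, c ≠ 0 ∧ N = span A {c} := by
  let I : FractionalIdeal A⁰ K := ⟨N, a, mem_nonZeroDivisors_of_ne_zero ha, hN⟩
  obtain ⟨c, rfl⟩ := (FractionalIdeal.isPrincipal I).principal
  exact ⟨c, by rintro rfl; exact hN0 (span_singleton_eq_bot.mpr rfl), rfl⟩

theorem div_algebraMap_notMem_span_singleton {π : A} (hπ : Irreducible π) {c : K}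
    (hc : c ≠ 0) : c / algebraMap A K π ∉ Submodule.span A {c} := by
  rw [Submodule.mem_span_singleton]
  rintro ⟨a, ha⟩
  have hπ0 : algebraMap A K π ≠ 0 :=
    (map_ne_zero_iff _ (IsFractionRing.injective A K)).mpr hπ.ne_zero
  rw [Algebra.smul_def, eq_div_iff hπ0, mul_right_comm, mul_eq_right₀ hc, ← map_mul,
    map_eq_one_iff _ (IsFractionRing.injective A K)] at ha
  exact hπ.not_isUnit (.of_mul_eq_one_right _ ha)

end FractionField

section ResidueMap

variable {A B : Type*} [CommRing A] [IsLocalRing A] [CommRing B] [Algebra A B]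
  {ρ : B →+* (ResidueField A)[X]}

theorem isLocalHom_algebraMap_of_residue
    (hρa : ∀ a, ρ (algebraMap A B a) = C (residue A a)) : IsLocalHom (algebraMap A B) where
  map_nonunit b hb := by
    have := hb.map ρ
    rwa [hρa, isUnit_map_iff, isUnit_map_iff] at this

theorem residue_aeval (hρa : ∀ a, ρ (algebraMap A B a) = C (residue A a))
    {x : B} (hx : ρ x = X) (p : A[X]) : ρ (aeval x p) = p.map (residue A) := by
  rw [aeval_def, hom_eval₂, hx, show ρ.comp (algebraMap A B) = C.comp (residue A) from
    RingHom.ext hρa]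
  rfl

end ResidueMap

section SpecialFiber

variable {A B : Type*} [CommRing A] [IsDomain A] [IsDiscreteValuationRing A] [CommRing B]
  [Algebra A B] {ρ : B →+* (ResidueField A)[X]} {π : A} (hπ : Irreducible π)
  (hρk : RingHom.ker ρ = Ideal.map (algebraMap A B) (maximalIdeal A))
include hπ hρk

theorem exists_eq_mul_algebraMap_of_residue_eq_zero {s : B} (hs : ρ s = 0) :
    ∃ t, s = t * algebraMap A B π := by
  rw [← RingHom.mem_ker, hρk, (IsDiscreteValuationRing.irreducible_iff_uniformizer π).mp hπ,
    Ideal.map_span, Set.image_singleton, Ideal.mem_span_singleton'] at hs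
  obtain ⟨t, ht⟩ := hs
  exact ⟨t, ht.symm⟩

theorem residue_derivation_eq (hρa : ∀ a, ρ (algebraMap A B a) = C (residue A a))
    (D : Derivation A B B) {x : B} (hx : ρ x = X) (s : B) :
    ρ (D s) = derivative (ρ s) * ρ (D x) := by
  obtain ⟨p, hp⟩ := map_surjective (residue A) residue_surjective (ρ s)
  obtain ⟨t, ht⟩ := exists_eq_mul_algebraMap_of_residue_eq_zero (s := s - aeval x p) hπ hρk
    (by rw [map_sub, residue_aeval hρa hx, hp, sub_self])
  have hπ0 : residue A π = 0 := (residue_eq_zero_iff π).mpr hπ.not_isUnit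
  rw [sub_eq_iff_eq_add] at ht
  simp [ht, hρa, hπ0, residue_aeval hρa hx, derivative_map]

end SpecialFiber

namespace Subalgebra

section Derivative

variable {A K : Type*} [CommRing A] [Field K] [Algebra A K] (S : Subalgebra A K[X])

def derivationScalars : Submodule A K where
  carrier := {d | ∀ f ∈ S, C d * derivative f ∈ S}
  add_mem' hd he f hf := by simpa only [C_add, add_mul] using S.add_mem (hd f hf) (he f hf)
  zero_mem' f _ := by simp only [C_0, zero_mul, S.zero_mem]
  smul_mem' a d hd f hf := by
    simpa only [← smul_C, smul_mul_assoc] using S.smul_mem (hd f hf) a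

def linearLeadingCoeffs : Submodule A K where
  carrier := {c | ∃ v, C c * X + C v ∈ S}
  add_mem' := by
    rintro c e ⟨v, hv⟩ ⟨w, hw⟩
    exact ⟨v + w, by simpa only [C_add, add_mul, add_add_add_comm] using S.add_mem hv hw⟩
  zero_mem' := ⟨0, by simp only [C_0, zero_mul, add_zero, S.zero_mem]⟩
  smul_mem' a c := by
    rintro ⟨v, hv⟩
    exact ⟨a • v, by simpa only [← smul_C, smul_mul_assoc, smul_add] using S.smul_mem hv a⟩

variable {S}

noncomputable def scaledDerivative {d : K} (hd : d ∈ S.derivationScalars) :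
    Derivation A S S where
  toFun f := ⟨C d * derivative (f : K[X]), hd f f.2⟩
  map_add' f g := Subtype.ext (by simp [mul_add])
  map_smul' a f := Subtype.ext (by simp)
  map_one_eq_zero' := Subtype.ext (by simp)
  leibniz' f g := Subtype.ext (by simp [derivative_mul]; ring)

@[simp]
theorem coe_scaledDerivative {d : K} (hd : d ∈ S.derivationScalars) (f : S) :
    (scaledDerivative hd f : K[X]) = C d * derivative (f : K[X]) := rfl

theorem mem_derivationScalars_adjoin {s : Set K[X]} {d : K}
    (h : ∀ f ∈ s, C d * derivative f ∈ Algebra.adjoin A s) :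
    d ∈ (Algebra.adjoin A s).derivationScalars := by
  intro f hf
  induction hf using Algebra.adjoin_induction with
  | mem f hf => exact h f hf
  | algebraMap a => simp
  | add f g _ _ hf hg => simpa only [derivative_add, mul_add] using add_mem hf hg
  | mul f g hf' hg' hf hg =>
    have h_leibniz :
        C d * derivative (f * g) = g * (C d * derivative f) + f * (C d * derivative g) := by
      rw [derivative_mul]; ring
    exact h_leibniz ▸ add_mem (mul_mem hg' hf) (mul_mem hf' hg)

theorem exists_ne_zero_mem_derivationScalars [IsDomain A] (hfg : S.FG)
    (hgen : ∀ f : K[X], ∃ a : A, a ≠ 0 ∧ C (algebraMap A K a) * f ∈ S) :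
    ∃ a : A, a ≠ 0 ∧ algebraMap A K a ∈ S.derivationScalars := by
  obtain ⟨t, rfl⟩ := hfg
  choose a ha0 ha using fun f : K[X] => hgen (derivative f)
  refine ⟨∏ f ∈ t, a f, Finset.prod_ne_zero_iff.mpr fun f _ => ha0 f,
    mem_derivationScalars_adjoin fun f hf => ?_⟩
  obtain ⟨b, hb⟩ := Finset.dvd_prod_of_mem a hf
  simpa [hb, Algebra.smul_def, Polynomial.algebraMap_apply, C_mul, mul_comm, mul_assoc] using
    Subalgebra.smul_mem _ (ha f) b

theorem aeval_linear_injective [IsFractionRing A K] {c v : K} (hx : C c * X + C v ∈ S)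
    (hc0 : c ≠ 0) : Function.Injective (aeval (⟨_, hx⟩ : S) : A[X] →ₐ[A] S) := by
  have htr : Transcendental A (C c * X + C v) :=
    ((C c * X + C v).transcendental (by rw [natDegree_linear hc0]; exact one_ne_zero)
      (by simpa [leadingCoeff_linear hc0] using hc0)).restrictScalars
      (IsFractionRing.injective A K)
  rw [transcendental_iff_injective] at htr
  exact .of_comp (f := S.val) (by rwa [← AlgHom.coe_comp, ← aeval_algHom])

end Derivative

section Integrality

variable {A K : Type*} [CommRing A] [IsDomain A] [ValuationRing A] [Field K] [Algebra A K]
  [IsFractionRing A K] {S : Subalgebra A K[X]} [IsLocalHom (algebraMap A S)]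

theorem isInteger_of_C_mem {c : K} (hc : C c ∈ S) : IsLocalization.IsInteger A c := by
  rcases ValuationRing.isInteger_or_isInteger A c with h | ⟨b, hb⟩
  · exact h
  obtain rfl | hc0 := eq_or_ne c 0
  · exact IsLocalization.isInteger_zero
  have hunit : IsUnit (algebraMap A S b) := by
    refine .of_mul_eq_one ⟨C c, hc⟩ (Subtype.ext ?_)
    simp [Polynomial.algebraMap_apply, hb, ← C_mul, inv_mul_cancel₀ hc0]
  obtain ⟨u, rfl⟩ := (isUnit_map_iff _ _).mp hunit
  exact ⟨↑u⁻¹, by rw [map_units_inv, hb, inv_inv]⟩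

theorem isInteger_mul_of_mem {d c : K} (hd : d ∈ S.derivationScalars)
    (hc : c ∈ S.linearLeadingCoeffs) : IsLocalization.IsInteger A (d * c) := by
  obtain ⟨v, hv⟩ := hc
  apply isInteger_of_C_mem (S := S)
  simpa using hd _ hv

theorem exists_algebraMap_eq_of_natDegree_eq_zero {s : S} (hs : (s : K[X]).natDegree = 0) :
    ∃ a, algebraMap A S a = s := by
  obtain ⟨a, ha⟩ := isInteger_of_C_mem (S := S) (eq_C_of_natDegree_eq_zero hs ▸ s.2)
  refine ⟨a, Subtype.ext ?_⟩
  rw [coe_algebraMap, Polynomial.algebraMap_apply, ha, ← eq_C_of_natDegree_eq_zero hs]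

theorem aeval_surjective_of_inv_mem_derivationScalars [CharZero (ResidueField A)] {c v : K}
    (hx : C c * X + C v ∈ S) (hc0 : c ≠ 0) (hc : c⁻¹ ∈ S.derivationScalars) :
    Function.Surjective (aeval (⟨_, hx⟩ : S) : A[X] →ₐ[A] S) := by
  have : CharZero A := RingHom.charZero (residue A)
  have : CharZero K := charZero_of_injective_algebraMap (IsFractionRing.injective A K)
  set x : S := ⟨_, hx⟩
  set D := scaledDerivative hc
  have hDx : D x = 1 := Subtype.ext (by simp [D, x, ← C_mul, inv_mul_cancel₀ hc0])
  intro s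
  induction hs : (s : K[X]).natDegree using Nat.strong_induction_on generalizing s with
  | _ n ih =>
  obtain rfl | hn := eq_or_ne n 0
  · obtain ⟨a, rfl⟩ := exists_algebraMap_eq_of_natDegree_eq_zero hs
    exact ⟨C a, aeval_C _ _⟩
  have hDs : (D s : K[X]).natDegree < n :=
    (natDegree_C_mul_le _ _).trans_lt ((natDegree_derivative_le _).trans_lt (by omega))
  obtain ⟨g, hg⟩ := ih _ hDs (D s) rfl
  obtain ⟨G, rfl⟩ := exists_derivative_eq isUnit_natCast_add_one g
  have hD0 : D (s - aeval x G) = 0 := by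
    rw [map_sub, D.map_aeval, hDx, smul_eq_mul, mul_one, hg, sub_self]
  have hD0' : C c⁻¹ * derivative ((s - aeval x G : S) : K[X]) = 0 := congrArg Subtype.val hD0
  obtain ⟨a, ha⟩ := exists_algebraMap_eq_of_natDegree_eq_zero <| derivative_eq_zero.mp <|
    (mul_eq_zero.mp hD0').resolve_left (C_ne_zero.mpr (inv_ne_zero hc0))
  exact ⟨G + C a, by rw [map_add, aeval_C, ha, add_sub_cancel]⟩

end Integrality

section SpecialFiber

variable {A K : Type*} [CommRing A] [IsDomain A] [IsDiscreteValuationRing A] [Field K]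
  [Algebra A K] [IsFractionRing A K] {S : Subalgebra A K[X]} {ρ : S →+* (ResidueField A)[X]}
  {π : A} (hπ : Irreducible π)
  (hρk : RingHom.ker ρ = Ideal.map (algebraMap A S) (maximalIdeal A))
include hπ hρk

theorem C_inv_mul_mem_of_residue_eq_zero {s : S} (hs : ρ s = 0) :
    C (algebraMap A K π)⁻¹ * s ∈ S := by
  obtain ⟨t, rfl⟩ := exists_eq_mul_algebraMap_of_residue_eq_zero hπ hρk hs
  have hπ0 : algebraMap A K π ≠ 0 :=
    (map_ne_zero_iff _ (IsFractionRing.injective A K)).mpr hπ.ne_zero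
  simp [Polynomial.algebraMap_apply, mul_left_comm, ← C_mul, inv_mul_cancel₀ hπ0]

theorem exists_residue_scaledDerivative_ne_zero {d : K} (hd : d ∈ S.derivationScalars)
    (hd0 : d ≠ 0) (hJ : S.derivationScalars = Submodule.span A {d}) :
    ∃ s, ρ (scaledDerivative hd s) ≠ 0 := by
  by_contra! h
  apply div_algebraMap_notMem_span_singleton hπ hd0
  rw [← hJ]
  intro f hf
  simpa [div_eq_mul_inv, mul_comm d, mul_assoc] using
    C_inv_mul_mem_of_residue_eq_zero hπ hρk (h ⟨f, hf⟩)

variable (hρa : ∀ a, ρ (algebraMap A S a) = C (residue A a))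
include hρa

theorem derivative_residue_ne_zero [CharZero (ResidueField A)] {c v : K}
    (hx : C c * X + C v ∈ S) (hc0 : c ≠ 0) (hI : S.linearLeadingCoeffs = Submodule.span A {c}) :
    derivative (ρ ⟨_, hx⟩) ≠ 0 := by
  intro h
  obtain ⟨a, ha⟩ := residue_surjective ((ρ ⟨_, hx⟩).coeff 0)
  have hρ : ρ (⟨_, hx⟩ - algebraMap A S a) = 0 := by
    rw [map_sub, hρa, ha, ← eq_C_of_derivative_eq_zero h, sub_self]
  apply div_algebraMap_notMem_span_singleton hπ hc0
  rw [← hI]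
  refine ⟨(v - algebraMap A K a) / algebraMap A K π, ?_⟩
  convert C_inv_mul_mem_of_residue_eq_zero hπ hρk hρ using 1
  simp [Polynomial.algebraMap_apply, div_eq_mul_inv]
  ring

theorem inv_mem_derivationScalars [CharZero (ResidueField A)] (hρs : Function.Surjective ρ)
    {c v d : K} (hx : C c * X + C v ∈ S) (hc0 : c ≠ 0)
    (hI : S.linearLeadingCoeffs = Submodule.span A {c}) (hd : d ∈ S.derivationScalars)
    (hd0 : d ≠ 0) (hJ : S.derivationScalars = Submodule.span A {d}) :
    c⁻¹ ∈ S.derivationScalars := by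
  have := isLocalHom_algebraMap_of_residue hρa
  obtain ⟨b, hb⟩ := isInteger_mul_of_mem hd ⟨v, hx⟩
  suffices hb_unit : IsUnit b by
    obtain ⟨u, rfl⟩ := hb_unit
    convert S.derivationScalars.smul_mem (↑u⁻¹ : A) hd using 1
    rw [Algebra.smul_def, map_units_inv, hb]
    field_simp
  by_contra hb_unit
  set D := scaledDerivative hd
  have hDx : ρ (D ⟨_, hx⟩) = 0 := by
    have : D ⟨_, hx⟩ = algebraMap A S b :=
      Subtype.ext (by simp [D, Polynomial.algebraMap_apply, hb, C_mul])
    rw [this, hρa, (residue_eq_zero_iff b).mpr hb_unit, C_0]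
  obtain ⟨x₁, hx₁⟩ := hρs X
  obtain ⟨s, hs⟩ := exists_residue_scaledDerivative_ne_zero hπ hρk hd hd0 hJ
  rw [residue_derivation_eq hπ hρk hρa D hx₁] at hDx hs
  exact (mul_eq_zero.mp hDx).elim (derivative_residue_ne_zero hπ hρk hρa hx hc0 hI)
    (right_ne_zero_of_mul hs)

end SpecialFiber

theorem exists_aeval_bijective {A K : Type*} [CommRing A] [IsDomain A]
    [IsDiscreteValuationRing A] [Field K] [Algebra A K] [IsFractionRing A K]
    [CharZero (ResidueField A)] {S : Subalgebra A K[X]} (hfg : S.FG)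
    (hgen : ∀ f : K[X], ∃ a : A, a ≠ 0 ∧ C (algebraMap A K a) * f ∈ S)
    {ρ : S →+* (ResidueField A)[X]} (hρs : Function.Surjective ρ)
    (hρa : ∀ a, ρ (algebraMap A S a) = C (residue A a))
    (hρk : RingHom.ker ρ = Ideal.map (algebraMap A S) (maximalIdeal A)) :
    ∃ x : S, Function.Bijective (aeval x : A[X] →ₐ[A] S) := by
  have := isLocalHom_algebraMap_of_residue hρa
  obtain ⟨π, hπ⟩ := IsDiscreteValuationRing.exists_irreducible A
  have hφ {b : A} (hb : b ≠ 0) : algebraMap A K b ≠ 0 :=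
    (map_ne_zero_iff _ (IsFractionRing.injective A K)).mpr hb
  obtain ⟨a, ha0, haJ⟩ := exists_ne_zero_mem_derivationScalars hfg hgen
  obtain ⟨a', ha'0, ha'S⟩ := hgen X
  have ha'I : algebraMap A K a' ∈ S.linearLeadingCoeffs := ⟨0, by simpa using ha'S⟩
  obtain ⟨c, hc0, hI⟩ := Submodule.exists_ne_zero_eq_span_singleton_of_isInteger_smul
    ((Submodule.ne_bot_iff _).mpr ⟨_, ha'I, hφ ha'0⟩) ha0
    fun c hc => by simpa [Algebra.smul_def] using isInteger_mul_of_mem haJ hc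
  obtain ⟨d, hd0, hJ⟩ := Submodule.exists_ne_zero_eq_span_singleton_of_isInteger_smul
    ((Submodule.ne_bot_iff _).mpr ⟨_, haJ, hφ ha0⟩) ha'0
    fun d hd => by simpa [Algebra.smul_def, mul_comm] using isInteger_mul_of_mem hd ha'I
  obtain ⟨v, hx⟩ : c ∈ S.linearLeadingCoeffs := hI ▸ Submodule.mem_span_singleton_self c
  have hdJ : d ∈ S.derivationScalars := hJ ▸ Submodule.mem_span_singleton_self d
  exact ⟨⟨_, hx⟩, aeval_linear_injective hx hc0,
    aeval_surjective_of_inv_mem_derivationScalars hx hc0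
      (inv_mem_derivationScalars hπ hρk hρa hρs hx hc0 hI hdJ hd0 hJ)⟩

end Subalgebra

theorem exists_ne_zero_C_mul_mem_range_includeRight {A K R : Type*} [CommRing A]
    [Nontrivial A] [Field K] [Algebra A K] [IsFractionRing A K] [CommRing R] [Algebra A R]
    (ι : TensorProduct A K R ≃ₐ[K] K[X]) (f : K[X]) :
    ∃ a : A, a ≠ 0 ∧ C (algebraMap A K a) * f ∈
      ((ι.restrictScalars A).toAlgHom.comp Algebra.TensorProduct.includeRight).range := by
  obtain ⟨⟨r, a⟩, hr⟩ := IsLocalizedModule.surj (nonZeroDivisors A)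
    (TensorProduct.mk A K R 1) (ι.symm f)
  refine ⟨a, nonZeroDivisors.coe_ne_zero a, ⟨r, ?_⟩⟩
  calc ι.restrictScalars A (1 ⊗ₜ r) = ι.restrictScalars A ((a : A) • ι.symm f) := by
        rw [← Submonoid.smul_def, hr]; rfl
    _ = (a : A) • f := by rw [map_smul, AlgEquiv.restrictScalars_apply, ι.apply_symm_apply]
    _ = _ := Algebra.smul_def _ _

theorem AlgEquiv.comap_symm_map_algebraMap {A R S : Type*} [CommSemiring A] [Semiring R]
    [Semiring S] [Algebra A R] [Algebra A S] (e : R ≃ₐ[A] S) (I : Ideal A) :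
    (I.map (algebraMap A R)).comap (e.symm : S →+* R) = I.map (algebraMap A S) := by
  change Ideal.comap (e : R ≃+* S).symm _ = _
  rw [Ideal.comap_symm]
  change Ideal.map (e : R →+* S) _ = _
  rw [Ideal.map_map]
  exact congrArg (Ideal.map · I) e.toAlgHom.comp_algebraMap

theorem dvr_polynomial_fibration_general
    (A R : Type*) [CommRing A] [IsDomain A] [IsDiscreteValuationRing A]
    [CommRing R] [Algebra A R]
    (hfg : Algebra.FiniteType A R) (hflat : Module.Flat A R)
    (hchar : CharZero (IsLocalRing.ResidueField A))
    (hgen : Nonempty ((TensorProduct A (FractionRing A) R) ≃ₐ[FractionRing A]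
      Polynomial (FractionRing A)))
    (hspec : ∃ e : (R ⧸ Ideal.map (algebraMap A R) (IsLocalRing.maximalIdeal A)) ≃+*
        Polynomial (IsLocalRing.ResidueField A),
      ∀ a : A, e (Ideal.Quotient.mk _ (algebraMap A R a)) =
        Polynomial.C (IsLocalRing.residue A a)) :
    Nonempty (R ≃ₐ[A] Polynomial A) := by
  obtain ⟨ι⟩ := hgen
  obtain ⟨e, he⟩ := hspec
  let ψ : R →ₐ[A] (FractionRing A)[X] :=
    (ι.restrictScalars A).toAlgHom.comp Algebra.TensorProduct.includeRight
  have hψ : Function.Injective ψ := ι.injective.comp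
    (Algebra.TensorProduct.includeRight_injective (IsFractionRing.injective A _))
  let eS := AlgEquiv.ofInjective ψ hψ
  let ρ : ψ.range →+* (ResidueField A)[X] :=
    e.toRingHom.comp ((Ideal.Quotient.mk _).comp (eS.symm : ψ.range →+* R))
  have hρk : RingHom.ker ρ = Ideal.map (algebraMap A ψ.range) (maximalIdeal A) := by
    rw [RingHom.ker_comp_of_injective _ e.injective, ← RingHom.comap_ker, Ideal.mk_ker,
      eS.comap_symm_map_algebraMap]
  obtain ⟨x, hx⟩ := Subalgebra.exists_aeval_bijective (S := ψ.range)
    (Algebra.map_top ψ ▸ hfg.out.map ψ) (exists_ne_zero_C_mul_mem_range_includeRight ι)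
    (ρ := ρ) (e.surjective.comp (Ideal.Quotient.mk_surjective.comp eS.symm.surjective))
    (fun a => by simpa [ρ] using he a) hρk
  exact ⟨eS.trans (AlgEquiv.ofBijective _ hx).symm⟩

/-- **Sathaye's theorem / the DVR case of triviality of `𝔸ⁿ`-fibrations** (Proposition
`discval.prop`, case `n = 1`). Let `A` be a discrete valuation ring with quotient field
`K`, maximal ideal `m` and residue field `k = A/m` of characteristic zero. Let `R ⊇ A`
be a domain, finitely generated and flat over `A`, such that the generic fiber
`K ⊗[A] R` is `K`-isomorphic to `K[t]` and the special fiber `R/mR` is `k`-isomorphic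
to `k[t]` (the `k`-algebra condition is expressed by requiring the ring isomorphism to
be compatible with the structure maps from `A`).  Then `R ≅ A[t]`. -/
theorem dvr_polynomial_fibration
    (A R : Type*) [CommRing A] [IsDomain A] [IsDiscreteValuationRing A]
    [CommRing R] [IsDomain R] [Algebra A R]
    (hinj : Function.Injective (algebraMap A R))
    (hfg : Algebra.FiniteType A R) (hflat : Module.Flat A R)
    (hchar : CharZero (IsLocalRing.ResidueField A))
    (hgen : Nonempty ((TensorProduct A (FractionRing A) R) ≃ₐ[FractionRing A]
      Polynomial (FractionRing A)))
    (hspec : ∃ e : (R ⧸ Ideal.map (algebraMap A R) (IsLocalRing.maximalIdeal A)) ≃+*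
        Polynomial (IsLocalRing.ResidueField A),
      ∀ a : A, e (Ideal.Quotient.mk _ (algebraMap A R a)) =
        Polynomial.C (IsLocalRing.residue A a)) :
    Nonempty (R ≃ₐ[A] Polynomial A) :=
  dvr_polynomial_fibration_general A R hfg hflat hchar hgen hspec
end

section
/- Let ℂ* act linearly on A^3 = ℂ³ by t·(x,y,z) = (t^{n₁}x, t^{n₂}y, t^{n₃}z) with weights n₁ ≥ n₂ > 0 > n₃. Then the set U = {v ∈ A^3 : lim_{t→0} t·v = 0} equals the hyperplane {z = 0}, and any automorphism g of A^3 normalizing this ℂ*-action (i.e., g t g^{-1} ∈ {t, t^{-1}} for all t) that inverts the torus would map U to the line {x = y = 0}; hence every such g commutes with ℂ* and stabilizes U. -/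
/-!
Coordinatewise, `t ^ m * c → 0` as `t → 0` exactly when `m > 0` or `c = 0`, and as `t → ∞`
exactly when `m < 0` or `c = 0`; this identifies both attracting sets. If `g` inverted the
torus, then for `v` in `U = {z = 0}` we would get `t⁻¹ • g v = g (t • v) → g 0` as `t → 0`,
so the first two coordinates of `g v` vanish: `g` would embed the plane `U` into a line by a
polynomial map. That is impossible over `ℂ`, since along a line in `U` the remaining coordinate
is an injective, hence nonconstant, hence surjective polynomial. In the commuting case the same
limit argument gives `g U ⊆ U`, and likewise `g⁻¹ U ⊆ U`.
-/

open Filter Topology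

/-- The diagonal `ℂ*`-action on `𝔸³ = ℂ³` with integer weights `n`. -/
noncomputable def torusAction (n : Fin 3 → ℤ) (t : ℂ) (v : Fin 3 → ℂ) : Fin 3 → ℂ :=
  fun i => t ^ (n i) * v i

/-- The point map `ℂ³ → ℂ³` induced by a `ℂ`-algebra automorphism `σ` of `ℂ[x₀,x₁,x₂]`
(a polynomial automorphism of `𝔸³`). -/
noncomputable def pointMap (σ : MvPolynomial (Fin 3) ℂ ≃ₐ[ℂ] MvPolynomial (Fin 3) ℂ)
    (v : Fin 3 → ℂ) : Fin 3 → ℂ :=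
  fun i => MvPolynomial.eval v (σ (MvPolynomial.X i))

open Function Set Polynomial

section ZPow

variable {𝕜 : Type*} [NontriviallyNormedField 𝕜] {m : ℤ} {c L : 𝕜}

lemma tendsto_zpow_nhdsNE_zero_of_pos (hm : 0 < m) :
    Tendsto (fun t : 𝕜 => t ^ m) (𝓝[≠] 0) (𝓝 0) := by
  simpa [zero_zpow m hm.ne'] using
    ((continuousAt_zpow₀ (0 : 𝕜) m (Or.inr hm.le)).tendsto.mono_left nhdsWithin_le_nhds)

lemma eq_zero_of_tendsto_zpow_mul (hm : m < 0)
    (h : Tendsto (fun t : 𝕜 => t ^ m * c) (𝓝[≠] 0) (𝓝 L)) : c = 0 := by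
  have hprod := (tendsto_zpow_nhdsNE_zero_of_pos (neg_pos.2 hm)).mul h
  rw [zero_mul] at hprod
  refine tendsto_nhds_unique (tendsto_const_nhds.congr' ?_) hprod
  filter_upwards [self_mem_nhdsWithin] with t (ht : t ≠ 0)
  rw [← mul_assoc, ← zpow_add₀ ht, neg_add_cancel, zpow_zero, one_mul]

lemma tendsto_zpow_mul_nhdsNE_zero_iff :
    Tendsto (fun t : 𝕜 => t ^ m * c) (𝓝[≠] 0) (𝓝 0) ↔ 0 < m ∨ c = 0 := by
  refine ⟨fun h => ?_, ?_⟩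
  · rcases lt_trichotomy m 0 with hm | rfl | hm
    · exact Or.inr (eq_zero_of_tendsto_zpow_mul hm h)
    · exact Or.inr (by simpa using h)
    · exact Or.inl hm
  · rintro (hm | rfl)
    · simpa using (tendsto_zpow_nhdsNE_zero_of_pos hm).mul_const c
    · simp

lemma tendsto_zpow_mul_cobounded_iff :
    Tendsto (fun t : 𝕜 => t ^ m * c) (Bornology.cobounded 𝕜) (𝓝 0) ↔ m < 0 ∨ c = 0 := by
  rw [← inv_nhdsNE_zero, ← Filter.map_inv, tendsto_map'_iff, ← neg_pos,
    ← tendsto_zpow_mul_nhdsNE_zero_iff]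
  simp only [comp_def, inv_zpow']

end ZPow

lemma MvPolynomial.eval_polynomial_eval {R ι : Type*} [CommSemiring R] (g : ι → R[X]) (b : R)
    (p : MvPolynomial ι R) :
    MvPolynomial.eval (fun i => (g i).eval b) p = (MvPolynomial.aeval g p).eval b := by
  simpa using (MvPolynomial.comp_aeval_apply (f := g) (Polynomial.aeval b) p).symm

lemma not_injective_of_eval_slice {K : Type*} [Field K] [IsAlgClosed K] (F : K × K → K)
    (q : K[X]) (hq : ∀ b, F (0, b) = q.eval b) : ¬ Injective F := by
  intro hF
  have hdeg : q.natDegree ≠ 0 := by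
    intro hq0
    have := hF (a₁ := (0, 0)) (a₂ := (0, 1)) (by
      rw [hq, hq, eq_C_of_natDegree_eq_zero hq0, eval_C, eval_C])
    simp at this
  obtain ⟨b, hb⟩ := IsAlgClosed.eval_surjective hdeg (F (1, 0))
  simpa using hF ((hq b).trans hb)

def torusAttractingSet (n : Fin 3 → ℤ) (l : Filter ℂ) : Set (Fin 3 → ℂ) :=
  {v | Tendsto (fun t => torusAction n t v) l (𝓝 0)}

section Weights

variable {n : Fin 3 → ℤ}

lemma torusAttractingSet_nhdsNE_zero (h0 : 0 < n 0) (h1 : 0 < n 1) (h2 : n 2 < 0) :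
    torusAttractingSet n (𝓝[≠] 0) = {v | v 2 = 0} := by
  ext v
  simp [torusAttractingSet, torusAction, tendsto_pi_nhds, Fin.forall_fin_succ,
    tendsto_zpow_mul_nhdsNE_zero_iff, h0, h1, h2.not_gt]

lemma torusAttractingSet_cobounded (h0 : 0 < n 0) (h1 : 0 < n 1) (h2 : n 2 < 0) :
    torusAttractingSet n (Bornology.cobounded ℂ) = {v | v 0 = 0 ∧ v 1 = 0} := by
  ext v
  simp [torusAttractingSet, torusAction, tendsto_pi_nhds, Fin.forall_fin_succ,
    tendsto_zpow_mul_cobounded_iff, h0.not_gt, h1.not_gt, h2]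

end Weights

section PointMap

variable (σ : MvPolynomial (Fin 3) ℂ ≃ₐ[ℂ] MvPolynomial (Fin 3) ℂ)

lemma eval_pointMap (v : Fin 3 → ℂ) (p : MvPolynomial (Fin 3) ℂ) :
    MvPolynomial.eval (pointMap σ v) p = MvPolynomial.eval v (σ p) := by
  have h : MvPolynomial.aeval (pointMap σ v) = (MvPolynomial.aeval v).comp σ.toAlgHom :=
    MvPolynomial.algHom_ext fun i => by simp [pointMap]
  simpa [MvPolynomial.coe_aeval_eq_eval] using AlgHom.congr_fun h p

lemma pointMap_symm_pointMap (v : Fin 3 → ℂ) : pointMap σ.symm (pointMap σ v) = v := by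
  funext i
  simp [pointMap, eval_pointMap]

noncomputable def pointMapEquiv : (Fin 3 → ℂ) ≃ (Fin 3 → ℂ) where
  toFun := pointMap σ
  invFun := pointMap σ.symm
  left_inv := pointMap_symm_pointMap σ
  right_inv v := by simpa using pointMap_symm_pointMap σ.symm v

lemma continuous_pointMap : Continuous (pointMap σ) :=
  continuous_pi fun _ => MvPolynomial.continuous_eval _

lemma pointMap_slice_eq_eval (i : Fin 3) (b : ℂ) :
    pointMap σ ![0, b, 0] i =
      (MvPolynomial.aeval ![0, X, 0] (σ (MvPolynomial.X i))).eval b := by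
  rw [pointMap, ← MvPolynomial.eval_polynomial_eval]
  congr
  funext j
  fin_cases j <;> simp

end PointMap

section Normalizer

variable {n : Fin 3 → ℤ} {σ : MvPolynomial (Fin 3) ℂ ≃ₐ[ℂ] MvPolynomial (Fin 3) ℂ}

lemma tendsto_torusAction_pointMap {φ : ℂ → ℂ}
    (h : ∀ t : ℂ, t ≠ 0 → pointMap σ ∘ torusAction n t = torusAction n (φ t) ∘ pointMap σ)
    {v : Fin 3 → ℂ} (hv : v ∈ torusAttractingSet n (𝓝[≠] 0)) :
    Tendsto (fun t => torusAction n (φ t) (pointMap σ v)) (𝓝[≠] 0) (𝓝 (pointMap σ 0)) := by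
  refine (((continuous_pointMap σ).tendsto 0).comp hv).congr' ?_
  filter_upwards [self_mem_nhdsWithin] with t ht using congrFun (h t ht) v

lemma pointMap_mapsTo_of_commute (h0 : 0 < n 0) (h1 : 0 < n 1) (h2 : n 2 < 0)
    (h : ∀ t : ℂ, t ≠ 0 → pointMap σ ∘ torusAction n t = torusAction n t ∘ pointMap σ) :
    MapsTo (pointMap σ) {v | v 2 = 0} {v | v 2 = 0} := by
  intro v hv
  rw [← torusAttractingSet_nhdsNE_zero h0 h1 h2] at hv
  exact eq_zero_of_tendsto_zpow_mul h2
    (tendsto_pi_nhds.1 (tendsto_torusAction_pointMap (φ := id) h hv) 2)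

lemma pointMap_mapsTo_of_invert (h0 : 0 < n 0) (h1 : 0 < n 1) (h2 : n 2 < 0)
    (h : ∀ t : ℂ, t ≠ 0 → pointMap σ ∘ torusAction n t = torusAction n t⁻¹ ∘ pointMap σ) :
    MapsTo (pointMap σ) {v | v 2 = 0} {v | v 0 = 0 ∧ v 1 = 0} := by
  intro v hv
  rw [← torusAttractingSet_nhdsNE_zero h0 h1 h2] at hv
  have hlim := tendsto_pi_nhds.1 (tendsto_torusAction_pointMap h hv)
  have hcoord : ∀ i, 0 < n i → pointMap σ v i = 0 := fun i hi =>
    eq_zero_of_tendsto_zpow_mul (neg_neg_of_pos hi) <| by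
      simpa only [torusAction, inv_zpow'] using hlim i
  exact ⟨hcoord 0 h0, hcoord 1 h1⟩

lemma pointMap_not_invert_torusAction (h0 : 0 < n 0) (h1 : 0 < n 1) (h2 : n 2 < 0) :
    ¬ ∀ t : ℂ, t ≠ 0 → pointMap σ ∘ torusAction n t = torusAction n t⁻¹ ∘ pointMap σ := by
  intro h
  have hline : ∀ x y : ℂ, pointMap σ ![x, y, 0] = ![0, 0, pointMap σ ![x, y, 0] 2] := by
    intro x y
    obtain ⟨hx, hy⟩ := pointMap_mapsTo_of_invert h0 h1 h2 h (show ![x, y, 0] 2 = 0 from rfl)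
    funext i
    fin_cases i <;> simp [hx, hy]
  refine not_injective_of_eval_slice (fun p => pointMap σ ![p.1, p.2, 0] 2) _
    (pointMap_slice_eq_eval σ 2) ?_
  rintro ⟨a, b⟩ ⟨c, d⟩ (hac : pointMap σ ![a, b, 0] 2 = pointMap σ ![c, d, 0] 2)
  have himg : pointMap σ ![a, b, 0] = pointMap σ ![c, d, 0] := by
    rw [hline a b, hline c d, hac]
  simpa using (pointMapEquiv σ).injective himg

lemma pointMap_symm_comp_torusAction
    (h : ∀ t : ℂ, t ≠ 0 → pointMap σ ∘ torusAction n t = torusAction n t ∘ pointMap σ) :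
    ∀ t : ℂ, t ≠ 0 → pointMap σ.symm ∘ torusAction n t = torusAction n t ∘ pointMap σ.symm :=
  fun t ht => ((semiconj_iff_comp_eq.2 (h t ht)).inverse_left
    (pointMapEquiv σ).left_inv (pointMapEquiv σ).right_inv).comp_eq

end Normalizer

/-- Step (d) in the proof of Theorem `A3linearization.thm`.  Let `ℂ*` act linearly on
`𝔸³` with weights `n₀ ≥ n₁ > 0 > n₂`.  Then the attracting set
`U = {v : lim_{t→0} t·v = 0}` is the hyperplane `{z = 0}`, the attracting set for
`t → ∞` is the line `{x = y = 0}`, and every polynomial automorphism `g` of `𝔸³`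
normalizing the `ℂ*`-action (conjugation by `g` fixes or inverts the torus) in fact
commutes with the `ℂ*`-action and stabilizes `U`. -/
theorem normalizer_of_torus_action_stabilizes_attracting_set
    (n : Fin 3 → ℤ) (h01 : n 0 ≥ n 1) (h1 : n 1 > 0) (h2 : n 2 < 0)
    (σ : MvPolynomial (Fin 3) ℂ ≃ₐ[ℂ] MvPolynomial (Fin 3) ℂ)
    (hnorm : (∀ t : ℂ, t ≠ 0 → pointMap σ ∘ torusAction n t = torusAction n t ∘ pointMap σ) ∨
      (∀ t : ℂ, t ≠ 0 → pointMap σ ∘ torusAction n t = torusAction n t⁻¹ ∘ pointMap σ)) :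
    {v : Fin 3 → ℂ | Tendsto (fun t : ℂ => torusAction n t v) (𝓝[≠] 0) (𝓝 0)} =
      {v : Fin 3 → ℂ | v 2 = 0} ∧
    {v : Fin 3 → ℂ |
        Tendsto (fun t : ℂ => torusAction n t v) (Bornology.cobounded ℂ) (𝓝 0)} =
      {v : Fin 3 → ℂ | v 0 = 0 ∧ v 1 = 0} ∧
    (∀ t : ℂ, t ≠ 0 → pointMap σ ∘ torusAction n t = torusAction n t ∘ pointMap σ) ∧
    pointMap σ '' {v : Fin 3 → ℂ | v 2 = 0} = {v : Fin 3 → ℂ | v 2 = 0} := by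
  have h0 : 0 < n 0 := h1.trans_le h01
  have hcomm := hnorm.resolve_right (pointMap_not_invert_torusAction h0 h1 h2)
  refine ⟨torusAttractingSet_nhdsNE_zero h0 h1 h2, torusAttractingSet_cobounded h0 h1 h2,
    hcomm, ?_⟩
  exact ((pointMapEquiv σ).bijOn' (pointMap_mapsTo_of_commute h0 h1 h2 hcomm)
    (pointMap_mapsTo_of_commute h0 h1 h2 (pointMap_symm_comp_torusAction hcomm))).image_eq
end
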